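/- For an integer m ≥ 3 and each k ∈ {1, …, m}, let C_k be the circle in ℝ² with center (−4^k, 0) and radius 4^k + 4^{−k}. Then: (a) every two of the circles C_1, …, C_m intersect in exactly two points; (b) no point of the plane lies on three of the circles; and (c) for all i < j < k, both intersection points of C_i and C_j lie in the open disk of C_k, both intersection points of C_j and C_k lie in the open disk of C_i, and both intersection points of C_i and C_k lie strictly outside the closed disk of C_j. In particular every triple of these circles is NonKrupp. -/

import Mathlib

/-!
Write `circleOf a` for the circle with center `(-a, 0)` and radius `a + a⁻¹`, so that the
circles of the theorem are `circleOf (4 ^ k)`. The power of `p = (x, y)` with respect to it is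
`x² + y² - 2 + 2 a x - a⁻²`, affine in `a` up to the term `a⁻²`. Subtracting the equations of
two circles pins the abscissa of their common points to `-(a + b) / (2 a² b²)`, and then the power
of these points with respect to a third circle `circleOf c` is
`-(c - a)(c - b)(ab + bc + ca) / (abc)²`. This value never vanishes, is negative when `c` lies
outside `[a, b]` and positive when it lies between, and is the same for both common points, so no
third circle separates them.
-/

noncomputable section

/-- The Euclidean plane. -/
abbrev E2 := EuclideanSpace ℝ (Fin 2)

/-- The point `(x, y)` of the plane. -/
def pt (x y : ℝ) : E2 := !₂[x, y]

/-- The circle with center `c` and radius `r` separates the points `p` and `q`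
(not lying on it) if exactly one of them lies in its open disk. -/
def Separates (c : E2) (r : ℝ) (p q : E2) : Prop :=
  Xor' (p ∈ Metric.ball c r) (q ∈ Metric.ball c r)

/-- The circle with center `c`, radius `r` does not separate the two intersection points of
the other two circles. -/
def NonSepInt (c : E2) (r : ℝ) (c₁ : E2) (r₁ : ℝ) (c₂ : E2) (r₂ : ℝ) : Prop :=
  ∀ p q : E2, p ≠ q → Metric.sphere c₁ r₁ ∩ Metric.sphere c₂ r₂ = {p, q} →
    ¬ Separates c r p q

open EuclideanGeometry

lemma dist_pt_sq (p : E2) (x y : ℝ) : dist p (pt x y) ^ 2 = (p 0 - x) ^ 2 + (p 1 - y) ^ 2 := by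
  rw [EuclideanSpace.dist_eq, Real.sq_sqrt (by positivity)]
  simp [Fin.sum_univ_two, pt, Real.dist_eq, sq_abs]

lemma eq_pt_iff {p : E2} {x y : ℝ} : p = pt x y ↔ p 0 = x ∧ p 1 = y := by
  constructor
  · rintro rfl
    simp [pt]
  · rintro ⟨hx, hy⟩
    ext i
    fin_cases i <;> simp [pt, hx, hy]

def circleOf (a : ℝ) : Sphere E2 := ⟨pt (-a) 0, a + a⁻¹⟩

lemma power_circleOf {a : ℝ} (ha : a ≠ 0) (p : E2) :
    (circleOf a).power p = p 0 ^ 2 + p 1 ^ 2 - 2 + 2 * a * p 0 - a⁻¹ ^ 2 := by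
  rw [Sphere.power, circleOf, dist_pt_sq]
  field_simp
  ring

lemma radius_circleOf_nonneg {a : ℝ} (ha : 0 ≤ a) : 0 ≤ (circleOf a).radius := by
  simp only [circleOf]
  positivity

lemma power_circleOf_eq_zero_iff {a : ℝ} (ha : 0 < a) {p : E2} :
    (circleOf a).power p = 0 ↔ p ∈ circleOf a :=
  Sphere.power_eq_zero_iff_mem_sphere (radius_circleOf_nonneg ha.le)

lemma power_circleOf_eq_add {a c : ℝ} (ha : a ≠ 0) (hc : c ≠ 0) (p : E2) :
    (circleOf c).power p = (circleOf a).power p + 2 * (c - a) * p 0 + a⁻¹ ^ 2 - c⁻¹ ^ 2 := by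
  rw [power_circleOf ha, power_circleOf hc]
  ring

lemma fst_eq_of_mem_circleOf_inter {a b : ℝ} (ha : 0 < a) (hb : 0 < b) (hab : a ≠ b) {p : E2}
    (hpa : p ∈ circleOf a) (hpb : p ∈ circleOf b) :
    p 0 = -(a + b) / (2 * a ^ 2 * b ^ 2) := by
  have h := power_circleOf_eq_add ha.ne' hb.ne' p
  rw [(power_circleOf_eq_zero_iff ha).2 hpa, (power_circleOf_eq_zero_iff hb).2 hpb] at h
  rw [eq_div_iff (by positivity)]
  refine mul_left_cancel₀ (sub_ne_zero.2 hab.symm) ?_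
  field_simp at h
  linear_combination -h

lemma mem_circleOf_inter_iff {a b : ℝ} (ha : 0 < a) (hb : 0 < b) (hab : a ≠ b) {p : E2} :
    p ∈ circleOf a ∧ p ∈ circleOf b ↔ p 0 = -(a + b) / (2 * a ^ 2 * b ^ 2) ∧ p ∈ circleOf a := by
  refine ⟨fun h => ⟨fst_eq_of_mem_circleOf_inter ha hb hab h.1 h.2, h.1⟩, fun ⟨hx, hpa⟩ => ⟨hpa, ?_⟩⟩
  rw [← power_circleOf_eq_zero_iff hb, power_circleOf_eq_add ha.ne' hb.ne',
    (power_circleOf_eq_zero_iff ha).2 hpa, hx]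
  field_simp
  ring

lemma power_circleOf_of_mem_inter {a b c : ℝ} (ha : 0 < a) (hb : 0 < b) (hc : c ≠ 0)
    (hab : a ≠ b) {p : E2} (hpa : p ∈ circleOf a) (hpb : p ∈ circleOf b) :
    (circleOf c).power p = -((c - a) * (c - b) * (a * b + b * c + c * a)) / (a * b * c) ^ 2 := by
  rw [power_circleOf_eq_add ha.ne' hc, (power_circleOf_eq_zero_iff ha).2 hpa,
    fst_eq_of_mem_circleOf_inter ha hb hab hpa hpb]
  field_simp
  ring

lemma circleOf_inter_eq_pair {a b : ℝ} (ha : 0 < a) (hb : 0 < b) (hab : a ≠ b)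
    (h : 1 < 2 * a * b) : ∃ y, 0 < y ∧
      (circleOf a : Set E2) ∩ circleOf b =
        {pt (-(a + b) / (2 * a ^ 2 * b ^ 2)) y, pt (-(a + b) / (2 * a ^ 2 * b ^ 2)) (-y)} := by
  set x := -(a + b) / (2 * a ^ 2 * b ^ 2)
  -- `S` is the squared ordinate of the common points.
  set S := 2 + a⁻¹ ^ 2 - 2 * a * x - x ^ 2 with hS_def
  have hS : 0 < S := by
    have : S = (2 * a * b - 1) * (2 * a * b * (2 * a ^ 2 * b ^ 2 + 2 * a * b + 1)
        + (a ^ 2 + b ^ 2) * (2 * a * b + 1)) / (4 * a ^ 4 * b ^ 4) := by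
      simp only [hS_def, x]
      field_simp
      ring
    rw [this]
    exact div_pos (mul_pos (by linarith) (by positivity)) (by positivity)
  refine ⟨√S, Real.sqrt_pos.2 hS, Set.ext fun p => ?_⟩
  simp only [Set.mem_inter_iff, Sphere.mem_coe, Set.mem_insert_iff, Set.mem_singleton_iff,
    eq_pt_iff, ← and_or_left]
  rw [mem_circleOf_inter_iff ha hb hab, ← power_circleOf_eq_zero_iff ha, power_circleOf ha.ne',
    ← sq_eq_sq_iff_eq_or_eq_neg, Real.sq_sqrt hS.le]
  refine and_congr_right fun hx => ?_
  rw [hx, hS_def]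
  constructor <;> intro h <;> linarith

lemma power_circleOf_ne_zero_of_mem_inter {a b c : ℝ} (ha : 0 < a) (hb : 0 < b) (hc : 0 < c)
    (hab : a ≠ b) (hca : c ≠ a) (hcb : c ≠ b) {p : E2} (hpa : p ∈ circleOf a)
    (hpb : p ∈ circleOf b) : (circleOf c).power p ≠ 0 := by
  rw [power_circleOf_of_mem_inter ha hb hc.ne' hab hpa hpb]
  exact div_ne_zero (neg_ne_zero.2 (mul_ne_zero
    (mul_ne_zero (sub_ne_zero.2 hca) (sub_ne_zero.2 hcb)) (by positivity))) (by positivity)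

lemma dist_center_lt_radius_of_mem_inter {a b c : ℝ} (ha : 0 < a) (hb : 0 < b) (hc : 0 < c)
    (hab : a ≠ b) (h : 0 < (c - a) * (c - b)) {p : E2} (hpa : p ∈ circleOf a)
    (hpb : p ∈ circleOf b) : dist p (circleOf c).center < (circleOf c).radius := by
  rw [← Sphere.power_neg_iff_dist_center_lt_radius (radius_circleOf_nonneg hc.le),
    power_circleOf_of_mem_inter ha hb hc.ne' hab hpa hpb]
  exact div_neg_of_neg_of_pos (neg_neg_of_pos (mul_pos h (by positivity))) (by positivity)

lemma radius_lt_dist_center_of_mem_inter {a b c : ℝ} (ha : 0 < a) (hb : 0 < b) (hc : 0 < c)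
    (hab : a ≠ b) (h : (c - a) * (c - b) < 0) {p : E2} (hpa : p ∈ circleOf a)
    (hpb : p ∈ circleOf b) : (circleOf c).radius < dist p (circleOf c).center := by
  rw [← Sphere.power_pos_iff_radius_lt_dist_center (radius_circleOf_nonneg hc.le),
    power_circleOf_of_mem_inter ha hb hc.ne' hab hpa hpb]
  exact div_pos (neg_pos.2 (mul_neg_of_neg_of_pos h (by positivity))) (by positivity)

lemma not_separates_of_power_eq {s : Sphere E2} (hr : 0 ≤ s.radius) {p q : E2}
    (h : s.power p = s.power q) : ¬ Separates s.center s.radius p q := by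
  simp only [Separates, Metric.mem_ball, ← Sphere.power_neg_iff_dist_center_lt_radius hr, h]
  exact (xor_self _).mp

lemma nonSepInt_circleOf {a b c : ℝ} (ha : 0 < a) (hb : 0 < b) (hc : 0 < c) (hbc : b ≠ c) :
    NonSepInt (circleOf a).center (circleOf a).radius (circleOf b).center (circleOf b).radius
      (circleOf c).center (circleOf c).radius := by
  intro p q _ hpq
  have hp : p ∈ (circleOf b : Set E2) ∩ circleOf c := hpq ▸ Set.mem_insert p {q}
  have hq : q ∈ (circleOf b : Set E2) ∩ circleOf c := hpq ▸ Set.mem_insert_of_mem p rfl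
  apply not_separates_of_power_eq (radius_circleOf_nonneg ha.le)
  rw [power_circleOf_of_mem_inter hb hc ha.ne' hbc hp.1 hp.2,
    power_circleOf_of_mem_inter hb hc ha.ne' hbc hq.1 hq.2]

theorem stmt7_general (m : ℕ) :
    let ctr : ℕ → E2 := fun k => pt (-(4 : ℝ) ^ k) 0
    let rad : ℕ → ℝ := fun k => (4 : ℝ) ^ k + (4 : ℝ) ^ (-(k : ℤ))
    let C : ℕ → Set E2 := fun k => Metric.sphere (ctr k) (rad k)
    (∀ i j : ℕ, 1 ≤ i → i ≤ m → 1 ≤ j → j ≤ m → i ≠ j →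
      ∃ p q : E2, p ≠ q ∧ C i ∩ C j = {p, q}) ∧
    (∀ i j k : ℕ, 1 ≤ i → i ≤ m → 1 ≤ j → j ≤ m → 1 ≤ k → k ≤ m →
      i ≠ j → i ≠ k → j ≠ k →
      ∀ x : E2, ¬ (x ∈ C i ∧ x ∈ C j ∧ x ∈ C k)) ∧
    (∀ i j k : ℕ, 1 ≤ i → i < j → j < k → k ≤ m →
      (∀ p ∈ C i ∩ C j, dist p (ctr k) < rad k) ∧
      (∀ p ∈ C j ∩ C k, dist p (ctr i) < rad i) ∧
      (∀ p ∈ C i ∩ C k, rad j < dist p (ctr j))) ∧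
    (∀ i j k : ℕ, 1 ≤ i → i ≤ m → 1 ≤ j → j ≤ m → 1 ≤ k → k ≤ m →
      i ≠ j → i ≠ k → j ≠ k →
      NonSepInt (ctr i) (rad i) (ctr j) (rad j) (ctr k) (rad k)) := by
  intro ctr rad C
  have hctr (k : ℕ) : ctr k = (circleOf (4 ^ k)).center := rfl
  have hrad (k : ℕ) : rad k = (circleOf (4 ^ k)).radius := by simp [rad, circleOf, zpow_neg]
  have hC (k : ℕ) : C k = circleOf (4 ^ k) := by simp only [C, hctr, hrad]
  have hpos (k : ℕ) : (0 : ℝ) < 4 ^ k := by positivity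
  have hone (k : ℕ) : (1 : ℝ) ≤ 4 ^ k := one_le_pow₀ (by norm_num)
  have hinj {i j : ℕ} (h : i ≠ j) : (4 : ℝ) ^ i ≠ 4 ^ j :=
    (pow_right_injective₀ (by norm_num) (by norm_num)).ne h
  have hmono : StrictMono fun k : ℕ => (4 : ℝ) ^ k := pow_right_strictMono₀ (by norm_num)
  simp only [hC, hctr, hrad]
  refine ⟨fun i j _ _ _ _ hij => ?_, fun i j k _ _ _ _ _ _ hij hik hjk x hx => ?_,
    fun i j k _ hij hjk _ => ?_, fun i j k _ _ _ _ _ _ _ _ hjk =>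
      nonSepInt_circleOf (hpos i) (hpos j) (hpos k) (hinj hjk)⟩
  · obtain ⟨y, hy, h⟩ := circleOf_inter_eq_pair (hpos i) (hpos j) (hinj hij)
      (by nlinarith [hone i, hone j])
    refine ⟨_, _, fun he => hy.ne' ?_, h⟩
    have hy' := (eq_pt_iff.1 he).2
    simp only [pt, PiLp.toLp_apply, Matrix.cons_val_one, Matrix.cons_val_fin_one] at hy'
    linarith
  · exact power_circleOf_ne_zero_of_mem_inter (hpos i) (hpos j) (hpos k) (hinj hij)
      (hinj hik.symm) (hinj hjk.symm) hx.1 hx.2.1 ((power_circleOf_eq_zero_iff (hpos k)).2 hx.2.2)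
  · have hij' := hmono hij
    have hjk' := hmono hjk
    refine ⟨fun p hp => ?_, fun p hp => ?_, fun p hp => ?_⟩
    · exact dist_center_lt_radius_of_mem_inter (hpos i) (hpos j) (hpos k) hij'.ne
        (mul_pos (by linarith) (by linarith)) hp.1 hp.2
    · exact dist_center_lt_radius_of_mem_inter (hpos j) (hpos k) (hpos i) hjk'.ne
        (mul_pos_of_neg_of_neg (by linarith) (by linarith)) hp.1 hp.2
    · exact radius_lt_dist_center_of_mem_inter (hpos i) (hpos k) (hpos j) (hij'.trans hjk').ne
        (mul_neg_of_pos_of_neg (by linarith) (by linarith)) hp.1 hp.2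

/-- For `m ≥ 3` and `k ∈ {1, …, m}`, let `C k` be the circle with center `(−4^k, 0)` and
radius `4^k + 4^{−k}`.  Then: (a) every two of the circles meet in exactly two points;
(b) no point lies on three of them; and (c) for `i < j < k`, both points of `C i ∩ C j` lie
in the open disk of `C k`, both points of `C j ∩ C k` lie in the open disk of `C i`, and both
points of `C i ∩ C k` lie strictly outside the closed disk of `C j`.  In particular every
triple of these circles is NonKrupp. -/
theorem stmt7 (m : ℕ) (hm : 3 ≤ m) :
    let ctr : ℕ → E2 := fun k => pt (-(4 : ℝ) ^ k) 0
    let rad : ℕ → ℝ := fun k => (4 : ℝ) ^ k + (4 : ℝ) ^ (-(k : ℤ))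
    let C : ℕ → Set E2 := fun k => Metric.sphere (ctr k) (rad k)
    (∀ i j : ℕ, 1 ≤ i → i ≤ m → 1 ≤ j → j ≤ m → i ≠ j →
      ∃ p q : E2, p ≠ q ∧ C i ∩ C j = {p, q}) ∧
    (∀ i j k : ℕ, 1 ≤ i → i ≤ m → 1 ≤ j → j ≤ m → 1 ≤ k → k ≤ m →
      i ≠ j → i ≠ k → j ≠ k →
      ∀ x : E2, ¬ (x ∈ C i ∧ x ∈ C j ∧ x ∈ C k)) ∧
    (∀ i j k : ℕ, 1 ≤ i → i < j → j < k → k ≤ m →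
      (∀ p ∈ C i ∩ C j, dist p (ctr k) < rad k) ∧
      (∀ p ∈ C j ∩ C k, dist p (ctr i) < rad i) ∧
      (∀ p ∈ C i ∩ C k, rad j < dist p (ctr j))) ∧
    (∀ i j k : ℕ, 1 ≤ i → i ≤ m → 1 ≤ j → j ≤ m → 1 ≤ k → k ≤ m →
      i ≠ j → i ≠ k → j ≠ k →
      NonSepInt (ctr i) (rad i) (ctr j) (rad j) (ctr k) (rad k)) :=
  stmt7_general m
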